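/- Let A be a positive definite n×n matrix and V ∈ ℝ^{n×p} of full column rank with p < n. For ε > 0 let L_ε = εA + VVᵀ. Then for any fixed subset X ⊆ {1,...,n} with |X| = m > p: det((L_ε)_X) = ε^{m−p} · ((−1)^p det([[A_X, V_{X,:}],[(V_{X,:})ᵀ, 0]]) + O(ε)) as ε → 0; in particular lim_{ε→0} ε^{p−m} det((L_ε)_X) = (−1)^p det([[A_X, V_{X,:}],[(V_{X,:})ᵀ, 0]]). -/
import Mathlib


open Matrix Filter

/-- The saddle-point matrix `[[A_X, V_X],[V_Xᵀ, 0]]` restricted to rows/columns in `X`. -/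
def saddleSub {n p : ℕ} (A : Matrix (Fin n) (Fin n) ℝ) (V : Matrix (Fin n) (Fin p) ℝ)
    (X : Finset (Fin n)) : Matrix (↥X ⊕ Fin p) (↥X ⊕ Fin p) ℝ :=
  Matrix.fromBlocks (A.submatrix (fun i => i.1) (fun i => i.1))
    (V.submatrix (fun i => i.1) id) (V.submatrix (fun i => i.1) id)ᵀ 0

/-- Perturbative limit of fixed-size L-ensembles: for `|X| = m > p`,
`ε^{p-m} det((εA + VVᵀ)_X) → (-1)^p det([[A_X, V_X],[V_Xᵀ, 0]])` as `ε → 0⁺`. -/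
theorem perturbative_limit_fixed_size {n p : ℕ}
    (A : Matrix (Fin n) (Fin n) ℝ) (hA : A.PosDef)
    (V : Matrix (Fin n) (Fin p) ℝ) (hV : V.rank = p) (hpn : p < n)
    (X : Finset (Fin n)) (m : ℕ) (hX : X.card = m) (hm : p < m) :
    Tendsto
      (fun ε : ℝ =>
        (((ε • A + V * Vᵀ)).submatrix (fun i : ↥X => i.1) (fun i : ↥X => i.1)).det
          / ε ^ (m - p))
      (nhdsWithin 0 (Set.Ioi 0))
      (nhds ((-1 : ℝ) ^ p * (saddleSub A V X).det)) := by
  classical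
  set c : ↥X → Fin n := fun i => i.1 with hc
  set B : Matrix ↥X ↥X ℝ := A.submatrix c c with hB
  set W : Matrix ↥X (Fin p) ℝ := V.submatrix c id with hW
  have hcard : Fintype.card ↥X = m := by simp [hX]
  set N : ℝ → Matrix (↥X ⊕ Fin p) (↥X ⊕ Fin p) ℝ :=
    fun ε => fromBlocks B W Wᵀ (-(ε • (1 : Matrix (Fin p) (Fin p) ℝ))) with hN
  have hNcont : Continuous fun ε : ℝ => (-1 : ℝ) ^ p * (N ε).det := by
    refine continuous_const.mul (Continuous.matrix_det ?_)
    apply continuous_matrix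
    rintro (i | i) (j | j) <;>
      simp only [hN, Matrix.fromBlocks_apply₁₁, Matrix.fromBlocks_apply₁₂,
        Matrix.fromBlocks_apply₂₁, Matrix.fromBlocks_apply₂₂, Matrix.neg_apply,
        Matrix.smul_apply, smul_eq_mul] <;> fun_prop
  have hN0 : N 0 = saddleSub A V X := by
    simp [hN, saddleSub, hB, hW, hc]
  have key : ∀ ε : ℝ, ε ≠ 0 →
      (((ε • A + V * Vᵀ)).submatrix c c).det / ε ^ (m - p)
        = (-1 : ℝ) ^ p * (N ε).det := by
    intro ε hε
    have hsub : ((ε • A + V * Vᵀ)).submatrix c c = ε • B + W * Wᵀ := by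
      ext i j
      simp [hB, hW, Matrix.mul_apply, Matrix.submatrix_apply, Matrix.add_apply,
        Matrix.smul_apply]
    -- Schur complement step
    haveI : Invertible (-1 : Matrix (Fin p) (Fin p) ℝ) :=
      ⟨-1, by simp, by simp⟩
    have hinv : ⅟(-1 : Matrix (Fin p) (Fin p) ℝ) = -1 := by
      simp [Matrix.invOf_eq_nonsing_inv]
      exact Matrix.inv_eq_right_inv (by simp)
    have hSchur :
        (fromBlocks (ε • B) W Wᵀ (-1 : Matrix (Fin p) (Fin p) ℝ)).det
          = (-1 : ℝ) ^ p * (ε • B + W * Wᵀ).det := by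
      rw [Matrix.det_fromBlocks₂₂, hinv]
      simp [Matrix.det_neg, Matrix.mul_neg, Matrix.neg_mul, sub_neg_eq_add]
    -- scaling identity
    set S := fromBlocks (ε • B) W Wᵀ (-1 : Matrix (Fin p) (Fin p) ℝ) with hS
    have hmul :
        (fromBlocks (ε • (1 : Matrix ↥X ↥X ℝ)) 0 0 (1 : Matrix (Fin p) (Fin p) ℝ)) * N ε
          = S * fromBlocks (1 : Matrix ↥X ↥X ℝ) 0 0 (ε • (1 : Matrix (Fin p) (Fin p) ℝ)) := by
      simp [hN, hS, Matrix.fromBlocks_multiply, Matrix.smul_mul, Matrix.mul_smul,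
        Matrix.mul_neg, smul_neg]
    have hdet := congrArg Matrix.det hmul
    rw [Matrix.det_mul, Matrix.det_mul, Matrix.det_fromBlocks_zero₂₁,
      Matrix.det_fromBlocks_zero₂₁, Matrix.det_smul, Matrix.det_smul] at hdet
    simp only [Matrix.det_one, mul_one, one_mul, hcard, Fintype.card_fin] at hdet
    -- hdet : ε ^ m * (N ε).det = S.det * ε ^ p
    have hεp : (ε : ℝ) ^ p ≠ 0 := pow_ne_zero _ hε
    have hSdet : S.det = ε ^ (m - p) * (N ε).det := by
      have hmp : m - p + p = m := Nat.sub_add_cancel hm.le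
      refine mul_right_cancel₀ hεp ?_
      rw [← hdet, mul_comm (ε ^ (m - p)) _, mul_assoc, ← pow_add, hmp]
      ring
    have hsq : ((-1 : ℝ) ^ p) * ((-1 : ℝ) ^ p) = 1 := by
      rw [← mul_pow]; simp
    have hdet2 : (ε • B + W * Wᵀ).det = (-1 : ℝ) ^ p * S.det := by
      rw [hSchur, ← mul_assoc, hsq, one_mul]
    rw [hsub, hdet2, hSdet, div_eq_iff (pow_ne_zero _ hε)]
    ring
  have hev : (fun ε : ℝ =>
        (((ε • A + V * Vᵀ)).submatrix c c).det / ε ^ (m - p))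
      =ᶠ[nhdsWithin 0 (Set.Ioi 0)] (fun ε => (-1 : ℝ) ^ p * (N ε).det) :=
    Filter.eventuallyEq_of_mem self_mem_nhdsWithin fun ε hε => key ε (ne_of_gt hε)
  have htend : Tendsto (fun ε : ℝ => (-1 : ℝ) ^ p * (N ε).det)
      (nhdsWithin 0 (Set.Ioi 0)) (nhds ((-1 : ℝ) ^ p * (N 0).det)) :=
    (hNcont.tendsto 0).mono_left nhdsWithin_le_nhds
  rw [← hN0]
  exact htend.congr' hev.symm
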